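/- arXiv:1602.03508 — 10 statements merged into one kernel-verified Lean document; each statement's English description precedes it below -/
import Mathlib

section
/- If the energy-saving problem (P) admits an optimal solution, then it admits an optimal solution (α, π) in which at most |K| + |B| + 1 patterns are active, i.e. |{ i ∈ I : π_i > 0 }| ≤ |K| + |B| + 1. -/
/-!
Each active pattern `i` contributes a profile in `ℝ^K × ℝ^B`: the rate it delivers to every
test point and the load it puts on every base station. Dividing by `π i` gives a point `p i`,
and the aggregate of an optimal solution — which alone determines the demands met and the power
`P^tot` — is the convex combination `∑ i, π i • p i`. By Carathéodory's theorem in the space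
`ℝ^K × ℝ^B` of dimension `|K| + |B|`, the same point is a convex combination `∑ i, π' i • p i`
with at most `|K| + |B| + 1` nonzero weights. Rescaling each pattern of `α` by `π' i / π i`
yields a feasible solution with the same aggregate, hence still optimal.
-/

open Finset

/-- Membership in the constraint set `X`. -/
def memX {K B I : Type*} [Fintype K] [Fintype I]
    (α : K → B → I → ℝ) (π : I → ℝ) : Prop :=
  (∀ k b i, 0 ≤ α k b i) ∧ (∀ i, 0 ≤ π i) ∧
    (∀ b i, ∑ k, α k b i ≤ π i) ∧ (∑ i, π i = 1)

/-- Usage of base station `b`. -/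
def ρ {K B I : Type*} [Fintype K] [Fintype I]
    (α : K → B → I → ℝ) (b : B) : ℝ :=
  ∑ k, ∑ i, α k b i

/-- Total network power consumption. -/
noncomputable def Ptot {K B I : Type*} [Fintype K] [Fintype B] [Fintype I]
    (P q : B → ℝ) (α : K → B → I → ℝ) : ℝ :=
  ∑ b, P b * ((1 - q b) * ρ α b + q b * (if ρ α b ≠ 0 then (1 : ℝ) else 0))

/-- Feasibility for the energy-saving problem (P). -/
def FeasP {K B I : Type*} [Fintype K] [Fintype B] [Fintype I]
    (r : K → B → I → ℝ) (d : K → ℝ) (α : K → B → I → ℝ) (π : I → ℝ) : Prop :=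
  memX α π ∧ ∀ k, d k ≤ ∑ i, ∑ b, α k b i * r k b i

theorem exists_sparse_weights_sum_smul_eq {ι E : Type*} [Fintype ι] [AddCommGroup E]
    [Module ℝ E] [FiniteDimensional ℝ E] (p : ι → E) {w : ι → ℝ} (hw₀ : ∀ i, 0 ≤ w i)
    (hw₁ : ∑ i, w i = 1) :
    ∃ w' : ι → ℝ, (∀ i, 0 ≤ w' i) ∧ ∑ i, w' i = 1 ∧ ∑ i, w' i • p i = ∑ i, w i • p i ∧
      #{i | w' i ≠ 0} ≤ Module.finrank ℝ E + 1 := by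
  classical
  have hx : ∑ i, w i • p i ∈ convexHull ℝ (Set.range p) :=
    (convex_convexHull ℝ _).sum_mem (fun i _ ↦ hw₀ i) hw₁
      fun i _ ↦ subset_convexHull ℝ _ (Set.mem_range_self i)
  obtain ⟨κ, _, z, c, hzp, hz, hc₀, hc₁, hcz⟩ := eq_pos_convex_span_of_mem_convexHull hx
  choose f hf using fun j ↦ hzp (Set.mem_range_self j)
  refine ⟨fun i ↦ ∑ j with f j = i, c j, fun i ↦ sum_nonneg fun j _ ↦ (hc₀ j).le,
    by rw [sum_fiberwise univ f c, hc₁], ?_, ?_⟩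
  · calc ∑ i, (∑ j with f j = i, c j) • p i = ∑ i, ∑ j with f j = i, c j • p (f j) := by
          refine sum_congr rfl fun i _ ↦ ?_
          rw [sum_smul]
          exact sum_congr rfl fun j hj ↦ by rw [(mem_filter.1 hj).2]
      _ = ∑ i, w i • p i := by rw [sum_fiberwise univ f fun j ↦ c j • p (f j)]; simpa only [hf]
  · have hsupp : ({i | ∑ j with f j = i, c j ≠ 0} : Finset ι) ⊆ univ.image f := by
      intro i hi
      obtain ⟨j, hj⟩ := nonempty_of_sum_ne_zero (mem_filter.1 hi).2
      exact mem_image.2 ⟨j, mem_univ j, (mem_filter.1 hj).2⟩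
    calc #{i | ∑ j with f j = i, c j ≠ 0} ≤ #(univ.image f) := card_le_card hsupp
      _ ≤ Fintype.card κ := card_image_le
      _ ≤ Module.finrank ℝ (vectorSpan ℝ (Set.range z)) + 1 := hz.card_le_finrank_succ
      _ ≤ Module.finrank ℝ E + 1 := by gcongr; exact Submodule.finrank_le _

section Patterns

variable {K B I : Type*}

def patternProfile [Fintype K] [Fintype B] (r α : K → B → I → ℝ) (i : I) :
    (K → ℝ) × (B → ℝ) :=
  (fun k ↦ ∑ b, α k b i * r k b i, fun b ↦ ∑ k, α k b i)

-- On an inactive pattern the factor is the junk value `π' i / 0 = 0`.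
noncomputable def rescale (α : K → B → I → ℝ) (π π' : I → ℝ) : K → B → I → ℝ :=
  fun k b i ↦ π' i / π i * α k b i

theorem fst_sum_patternProfile [Fintype K] [Fintype B] [Fintype I] (r α : K → B → I → ℝ)
    (k : K) : (∑ i, patternProfile r α i).1 k = ∑ i, ∑ b, α k b i * r k b i := by
  simp only [patternProfile, Prod.fst_sum, Finset.sum_apply]

theorem ρ_eq_snd_sum_patternProfile [Fintype K] [Fintype B] [Fintype I] (r α : K → B → I → ℝ)
    (b : B) : ρ α b = (∑ i, patternProfile r α i).2 b := by
  simp only [ρ, patternProfile, Prod.snd_sum, Finset.sum_apply]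
  exact sum_comm

theorem Ptot_congr [Fintype K] [Fintype B] [Fintype I] (P q : B → ℝ) {α α' : K → B → I → ℝ}
    (h : ∀ b, ρ α' b = ρ α b) : Ptot P q α' = Ptot P q α := by
  simp only [Ptot, h]

theorem memX.eq_zero_of_eq_zero [Fintype K] [Fintype I] {α : K → B → I → ℝ} {π : I → ℝ}
    (h : memX α π) {i : I} (hi : π i = 0) (k : K) (b : B) : α k b i = 0 := by
  obtain ⟨hα, -, hcol, -⟩ := h
  have : α k b i ≤ ∑ k', α k' b i := single_le_sum (fun k' _ ↦ hα k' b i) (mem_univ k)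
  linarith [hα k b i, hcol b i]

theorem memX.patternProfile_eq_zero [Fintype K] [Fintype B] [Fintype I]
    {α : K → B → I → ℝ} {π : I → ℝ} (h : memX α π) (r : K → B → I → ℝ) {i : I}
    (hi : π i = 0) : patternProfile r α i = 0 := by
  simp [patternProfile, h.eq_zero_of_eq_zero hi, Prod.ext_iff, funext_iff]

theorem memX.sum_smul_inv_smul_patternProfile [Fintype K] [Fintype B] [Fintype I]
    {α : K → B → I → ℝ} {π : I → ℝ} (h : memX α π) (r : K → B → I → ℝ) :
    ∑ i, π i • (π i)⁻¹ • patternProfile r α i = ∑ i, patternProfile r α i := by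
  refine sum_congr rfl fun i _ ↦ ?_
  by_cases hi : π i = 0
  · simp [h.patternProfile_eq_zero r hi]
  · exact smul_inv_smul₀ hi _

theorem sum_patternProfile_rescale [Fintype K] [Fintype B] [Fintype I]
    (r α : K → B → I → ℝ) (π π' : I → ℝ) :
    ∑ i, patternProfile r (rescale α π π') i = ∑ i, π' i • (π i)⁻¹ • patternProfile r α i := by
  refine sum_congr rfl fun i _ ↦ ?_
  simp [patternProfile, rescale, Prod.ext_iff, funext_iff, mul_sum, div_eq_mul_inv, mul_assoc]

theorem memX_rescale [Fintype K] [Fintype I] {α : K → B → I → ℝ} {π π' : I → ℝ}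
    (h : memX α π) (hπ'₀ : ∀ i, 0 ≤ π' i) (hπ'₁ : ∑ i, π' i = 1) :
    memX (rescale α π π') π' := by
  obtain ⟨hα, hπ, hcol, -⟩ := h
  refine ⟨fun k b i ↦ mul_nonneg (div_nonneg (hπ'₀ i) (hπ i)) (hα k b i), hπ'₀,
    fun b i ↦ ?_, hπ'₁⟩
  simp only [rescale, ← mul_sum]
  rcases (hπ i).eq_or_lt with hi | hi
  · simpa [← hi] using hπ'₀ i
  · calc π' i / π i * ∑ k, α k b i ≤ π' i / π i * π i :=
          mul_le_mul_of_nonneg_left (hcol b i) (div_nonneg (hπ'₀ i) hi.le)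
      _ = π' i := div_mul_cancel₀ _ hi.ne'

end Patterns

theorem stmt_0_general {K B I : Type*} [Fintype K] [Fintype B] [Fintype I]
    (P q : B → ℝ)
    (r : K → B → I → ℝ) (d : K → ℝ)
    (hopt : ∃ α π, FeasP r d α π ∧
      ∀ α' π', FeasP r d α' π' → Ptot P q α ≤ Ptot P q α') :
    ∃ α π, FeasP r d α π ∧
      (∀ α' π', FeasP r d α' π' → Ptot P q α ≤ Ptot P q α') ∧
      ({i : I | 0 < π i}.toFinset.card ≤ Fintype.card K + Fintype.card B + 1) := by
  classical
  obtain ⟨α, π, ⟨hX, hdem⟩, hmin⟩ := hopt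
  obtain ⟨-, hπ₀, -, hπ₁⟩ := id hX
  obtain ⟨π', hπ'₀, hπ'₁, hsum, hcard⟩ :=
    exists_sparse_weights_sum_smul_eq (fun i ↦ (π i)⁻¹ • patternProfile r α i) hπ₀ hπ₁
  have hprofile : ∑ i, patternProfile r (rescale α π π') i = ∑ i, patternProfile r α i := by
    rw [sum_patternProfile_rescale, hsum, hX.sum_smul_inv_smul_patternProfile]
  have hpower : Ptot P q (rescale α π π') = Ptot P q α :=
    Ptot_congr P q fun b ↦ by
      rw [ρ_eq_snd_sum_patternProfile r, hprofile, ← ρ_eq_snd_sum_patternProfile]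
  refine ⟨rescale α π π', π', ⟨memX_rescale hX hπ'₀ hπ'₁, fun k ↦ ?_⟩,
    fun α'' π'' h ↦ hpower ▸ hmin α'' π'' h, ?_⟩
  · rw [← fst_sum_patternProfile, hprofile, fst_sum_patternProfile]
    exact hdem k
  · have hsupp : {i : I | 0 < π' i}.toFinset ⊆ ({i | π' i ≠ 0} : Finset I) := by
      intro i hi
      rw [Set.mem_toFinset, Set.mem_ofPred_eq] at hi
      simpa using hi.ne'
    refine (card_le_card hsupp).trans (hcard.trans ?_)
    simp [Module.finrank_prod]

/-- If the energy-saving problem (P) admits an optimal solution, then it admits an optimal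
solution in which at most `|K| + |B| + 1` patterns are active. -/
theorem stmt_0 {K B I : Type*} [Fintype K] [Fintype B] [Fintype I]
    [Nonempty K] [Nonempty B] [Nonempty I]
    (P q : B → ℝ) (hP : ∀ b, 0 < P b) (hq : ∀ b, 0 < q b ∧ q b ≤ 1)
    (r : K → B → I → ℝ) (hr : ∀ k b i, 0 ≤ r k b i) (d : K → ℝ)
    (hopt : ∃ α π, FeasP r d α π ∧
      ∀ α' π', FeasP r d α' π' → Ptot P q α ≤ Ptot P q α') :
    ∃ α π, FeasP r d α π ∧
      (∀ α' π', FeasP r d α' π' → Ptot P q α ≤ Ptot P q α') ∧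
      ({i : I | 0 < π i}.toFinset.card ≤ Fintype.card K + Fintype.card B + 1) :=
  stmt_0_general P q r d hopt
end

section
/- If the feasible set of the energy-saving problem (P) is nonempty, then the objective P^tot attains its minimum over the feasible set, i.e. (P) admits an optimal solution. -/
open Finset

/- The feasible set is closed and lies in the unit box `0 ≤ (α, π) ≤ 1` (each `α k b i` is bounded by
`π i`, and each `π i` by `∑ π = 1`), hence compact. The objective is lower semicontinuous: the switch-on
cost `P_b q_b 𝟙(ρ_b ≠ 0)` is a nonnegative multiple of the indicator of an open set, and the rest is
linear. A lower semicontinuous function attains its minimum on a nonempty compact set. -/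

section

variable {K B I : Type*} [Fintype K] [Fintype I]

theorem continuous_ρ (b : B) : Continuous fun α : K → B → I → ℝ => ρ α b := by
  unfold ρ
  fun_prop

theorem isClosed_setOf_memX : IsClosed {p : (K → B → I → ℝ) × (I → ℝ) | memX p.1 p.2} := by
  simp only [memX, Set.ofPred_and, Set.ofPred_forall]
  refine .inter ?_ (.inter ?_ (.inter ?_ ?_))
  · exact isClosed_iInter fun k => isClosed_iInter fun b => isClosed_iInter fun i =>
      isClosed_le continuous_const (by fun_prop)
  · exact isClosed_iInter fun i => isClosed_le continuous_const (by fun_prop)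
  · exact isClosed_iInter fun b => isClosed_iInter fun i => isClosed_le (by fun_prop) (by fun_prop)
  · exact isClosed_eq (by fun_prop) continuous_const

theorem memX.mem_Icc {α : K → B → I → ℝ} {π : I → ℝ} (h : memX α π) : (α, π) ∈ Set.Icc 0 1 := by
  obtain ⟨hα, hπ, hαπ, hsum⟩ := h
  have hπ_le : ∀ i, π i ≤ 1 := fun i =>
    hsum ▸ Finset.single_le_sum (fun j _ => hπ j) (Finset.mem_univ i)
  have hα_le : ∀ k b i, α k b i ≤ 1 := fun k b i =>
    calc α k b i ≤ ∑ k', α k' b i := Finset.single_le_sum (fun k' _ => hα k' b i) (Finset.mem_univ k)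
      _ ≤ π i := hαπ b i
      _ ≤ 1 := hπ_le i
  exact ⟨⟨fun k b i => hα k b i, hπ⟩, ⟨fun k b i => hα_le k b i, hπ_le⟩⟩

theorem isCompact_setOf_memX : IsCompact {p : (K → B → I → ℝ) × (I → ℝ) | memX p.1 p.2} :=
  isCompact_Icc.of_isClosed_subset isClosed_setOf_memX fun _ hp => hp.mem_Icc

end

section

variable {K B I : Type*} [Fintype K] [Fintype B] [Fintype I]

theorem isCompact_setOf_feasP (r : K → B → I → ℝ) (d : K → ℝ) :
    IsCompact {p : (K → B → I → ℝ) × (I → ℝ) | FeasP r d p.1 p.2} := by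
  have hsplit : {p : (K → B → I → ℝ) × (I → ℝ) | FeasP r d p.1 p.2} =
      {p | memX p.1 p.2} ∩ ⋂ k, {p | d k ≤ ∑ i, ∑ b, p.1 k b i * r k b i} := by
    ext p
    simp [FeasP]
  rw [hsplit]
  exact isCompact_setOf_memX.inter_right
    (isClosed_iInter fun k => isClosed_le continuous_const (by fun_prop))

theorem lowerSemicontinuous_Ptot {P q : B → ℝ} (hP : ∀ b, 0 ≤ P b) (hq : ∀ b, 0 ≤ q b) :
    LowerSemicontinuous (Ptot P q : (K → B → I → ℝ) → ℝ) := by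
  refine lowerSemicontinuous_sum fun b _ => ?_
  have hsplit : (fun α : K → B → I → ℝ =>
        P b * ((1 - q b) * ρ α b + q b * (if ρ α b ≠ 0 then (1 : ℝ) else 0))) =
      fun α => P b * (1 - q b) * ρ α b +
        {α : K → B → I → ℝ | ρ α b ≠ 0}.indicator (fun _ => P b * q b) α := by
    ext α
    by_cases h : ρ α b ≠ 0 <;> simp [h] <;> ring
  rw [hsplit]
  exact ((continuous_const.mul (continuous_ρ b)).lowerSemicontinuous).add
    ((isOpen_ne_fun (continuous_ρ b) continuous_const).lowerSemicontinuous_indicator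
      (mul_nonneg (hP b) (hq b)))

end

theorem stmt_1_general {K B I : Type*} [Fintype K] [Fintype B] [Fintype I]
    (P q : B → ℝ) (hP : ∀ b, 0 < P b) (hq : ∀ b, 0 < q b ∧ q b ≤ 1)
    (r : K → B → I → ℝ) (d : K → ℝ)
    (hfeas : ∃ α π, FeasP r d α π) :
    ∃ α π, FeasP r d α π ∧
      ∀ α' π', FeasP r d α' π' → Ptot P q α ≤ Ptot P q α' := by
  obtain ⟨α₀, π₀, h₀⟩ := hfeas
  have hlsc : LowerSemicontinuous fun p : (K → B → I → ℝ) × (I → ℝ) => Ptot P q p.1 :=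
    (lowerSemicontinuous_Ptot (fun b => (hP b).le) fun b => (hq b).1.le).comp continuous_fst
  obtain ⟨⟨α, π⟩, hopt, hmin⟩ := (hlsc.lowerSemicontinuousOn _).exists_isMinOn
    ⟨(α₀, π₀), h₀⟩ (isCompact_setOf_feasP r d)
  exact ⟨α, π, hopt, fun α' π' h => hmin (a := (α', π')) h⟩

/-- If the feasible set of the energy-saving problem (P) is nonempty, then the objective
`P^tot` attains its minimum over the feasible set, i.e. (P) admits an optimal solution. -/
theorem stmt_1 {K B I : Type*} [Fintype K] [Fintype B] [Fintype I]
    [Nonempty K] [Nonempty B] [Nonempty I]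
    (P q : B → ℝ) (hP : ∀ b, 0 < P b) (hq : ∀ b, 0 < q b ∧ q b ≤ 1)
    (r : K → B → I → ℝ) (hr : ∀ k b i, 0 ≤ r k b i) (d : K → ℝ)
    (hfeas : ∃ α π, FeasP r d α π) :
    ∃ α π, FeasP r d α π ∧
      ∀ α' π', FeasP r d α' π' → Ptot P q α ≤ Ptot P q α' :=
  stmt_1_general P q hP hq r d hfeas
end

section
/- Assume d_k > 0 for all k ∈ K, set D = ∑_{k ∈ K} d_k and β_k = d_k / D. Define R* as the supremum of all R ∈ ℝ for which there exists (α, π) ∈ X with β_k R ≤ ∑_{i ∈ I} ∑_{b ∈ B} α_{kbi} r_{kbi} for all k ∈ K. Then this supremum is finite and attained, and the energy-saving problem (P) has a nonempty feasible set if and only if R* ≥ D. -/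
open Finset

/-! `R*` is the maximum over the compact set `X` of the continuous function `min_k rate_k / β_k`.
Since `d_k = β_k D`, problem (P) is feasible exactly when `D` is an achievable balanced rate, and as
the achievable balanced rates form a lower set this happens iff `D ≤ R*`. -/

theorem IsGreatest.mem_iff_le_of_isLowerSet {S : Set ℝ} {m : ℝ} (hm : IsGreatest S m)
    (hS : IsLowerSet S) (a : ℝ) : a ∈ S ↔ a ≤ m :=
  ⟨fun ha => hm.2 ha, fun ha => hS ha hm.1⟩

theorem isLowerSet_setOf_exists_forall_mul_le {X K : Type*} (s : Set X) (β : K → ℝ)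
    (hβ : ∀ k, 0 ≤ β k) (g : K → X → ℝ) :
    IsLowerSet {R : ℝ | ∃ x ∈ s, ∀ k, β k * R ≤ g k x} := by
  rintro R R' hR'R ⟨x, hx, hRx⟩
  exact ⟨x, hx, fun k => (mul_le_mul_of_nonneg_left hR'R (hβ k)).trans (hRx k)⟩

/-- The maximum is that of `x ↦ min_k g k x / β k`, a continuous function on the compact set `s`. -/
theorem exists_isGreatest_setOf_exists_forall_mul_le {X K : Type*} [TopologicalSpace X]
    [Fintype K] [Nonempty K] {s : Set X} (hs : IsCompact s) (hne : s.Nonempty)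
    (β : K → ℝ) (hβ : ∀ k, 0 < β k) (g : K → X → ℝ) (hg : ∀ k, Continuous (g k)) :
    ∃ m, IsGreatest {R : ℝ | ∃ x ∈ s, ∀ k, β k * R ≤ g k x} m := by
  set f : X → ℝ := fun x => univ.inf' univ_nonempty fun k => g k x / β k
  have hf : Continuous f :=
    Continuous.finset_inf'_apply univ_nonempty fun k _ => (hg k).div_const (β k)
  have forall_mul_le_iff (R : ℝ) (x : X) : (∀ k, β k * R ≤ g k x) ↔ R ≤ f x := by
    simp only [f, le_inf'_iff, mem_univ, true_implies, le_div_iff₀ (hβ _), mul_comm R]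
  obtain ⟨x₀, hx₀, hmax⟩ := hs.exists_isMaxOn hne hf.continuousOn
  refine ⟨f x₀, ⟨x₀, hx₀, (forall_mul_le_iff _ _).2 le_rfl⟩, ?_⟩
  rintro R ⟨x, hx, hR⟩
  exact ((forall_mul_le_iff R x).1 hR).trans (hmax hx)

section ConstraintSet

variable {K B I : Type*} [Fintype K] [Fintype I]

theorem memX.le_one {α : K → B → I → ℝ} {π : I → ℝ} (h : memX α π) :
    (∀ k b i, α k b i ≤ 1) ∧ ∀ i, π i ≤ 1 := by
  obtain ⟨hα, hπ, hsum, hπsum⟩ := h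
  have hπ_le (i : I) : π i ≤ 1 :=
    hπsum ▸ single_le_sum (fun j _ => hπ j) (mem_univ i)
  exact ⟨fun k b i => (single_le_sum (fun k' _ => hα k' b i) (mem_univ k)).trans
    ((hsum b i).trans (hπ_le i)), hπ_le⟩

theorem memX_zero_uniform [Nonempty I] :
    memX (0 : K → B → I → ℝ) (fun _ => (Fintype.card I : ℝ)⁻¹) := by
  refine ⟨fun _ _ _ => le_rfl, fun _ => by positivity, fun _ _ => by simp, ?_⟩
  simp [card_univ]

end ConstraintSet

theorem stmt_2_general {K B I : Type*} [Fintype K] [Fintype B] [Fintype I]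
    [Nonempty K] [Nonempty I]
    (r : K → B → I → ℝ)
    (d : K → ℝ) (hd : ∀ k, 0 < d k)
    (D : ℝ) (hD : D = ∑ k, d k)
    (β : K → ℝ) (hβ : ∀ k, β k = d k / D) :
    ∃ Rstar : ℝ,
      IsGreatest {R : ℝ | ∃ α π, memX α π ∧
          ∀ k, β k * R ≤ ∑ i, ∑ b, α k b i * r k b i} Rstar ∧
      ((∃ α π, memX α π ∧ ∀ k, d k ≤ ∑ i, ∑ b, α k b i * r k b i) ↔ D ≤ Rstar) := by
  have hD_pos : 0 < D := hD ▸ sum_pos (fun k _ => hd k) univ_nonempty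
  have hβ_pos (k : K) : 0 < β k := hβ k ▸ div_pos (hd k) hD_pos
  have hd_eq (k : K) : d k = β k * D := by rw [hβ, div_mul_cancel₀ _ hD_pos.ne']
  set g : K → (K → B → I → ℝ) × (I → ℝ) → ℝ := fun k p => ∑ i, ∑ b, p.1 k b i * r k b i
  have hS : {R : ℝ | ∃ α π, memX α π ∧ ∀ k, β k * R ≤ ∑ i, ∑ b, α k b i * r k b i} =
      {R : ℝ | ∃ p ∈ {p : (K → B → I → ℝ) × (I → ℝ) | memX p.1 p.2}, ∀ k, β k * R ≤ g k p} := by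
    simp only [Prod.exists, Set.mem_ofPred_eq, g]
  obtain ⟨Rstar, hRstar⟩ := exists_isGreatest_setOf_exists_forall_mul_le isCompact_setOf_memX
    ⟨(0, _), memX_zero_uniform⟩ β hβ_pos g fun k => by fun_prop
  have hlower := isLowerSet_setOf_exists_forall_mul_le
    {p : (K → B → I → ℝ) × (I → ℝ) | memX p.1 p.2} β (fun k => (hβ_pos k).le) g
  rw [← hS] at hRstar hlower
  simp only [hd_eq]
  exact ⟨Rstar, hRstar, hRstar.mem_iff_le_of_isLowerSet hlower D⟩

/-- Feasibility test via rate balancing: the supremum `R*` of achievable balanced sum rates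
is finite and attained, and problem (P) is feasible iff `R* ≥ D`. -/
theorem stmt_2 {K B I : Type*} [Fintype K] [Fintype B] [Fintype I]
    [Nonempty K] [Nonempty B] [Nonempty I]
    (r : K → B → I → ℝ) (hr : ∀ k b i, 0 ≤ r k b i)
    (d : K → ℝ) (hd : ∀ k, 0 < d k)
    (D : ℝ) (hD : D = ∑ k, d k)
    (β : K → ℝ) (hβ : ∀ k, β k = d k / D) :
    ∃ Rstar : ℝ,
      IsGreatest {R : ℝ | ∃ α π, memX α π ∧
          ∀ k, β k * R ≤ ∑ i, ∑ b, α k b i * r k b i} Rstar ∧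
      ((∃ α π, memX α π ∧ ∀ k, d k ≤ ∑ i, ∑ b, α k b i * r k b i) ↔ D ≤ Rstar) :=
  stmt_2_general r d hd D hD β hβ
end

section
/- Let β_k > 0 with ∑_{k ∈ K} β_k = 1 and r_{kbi} ≥ 0, and let Λ = { λ : K → ℝ : λ_k ≥ 0 for all k, ∑_{k ∈ K} λ_k = 1 }. Let R* be the maximum of R over all (α, π, R) with (α, π) ∈ X and β_k R ≤ ∑_{i ∈ I} ∑_{b ∈ B} α_{kbi} r_{kbi} for all k. Then strong duality holds: max_{λ ∈ Λ} min_{(α, π) ∈ X} ( − ∑_{k,b,i} α_{kbi} r_{kbi} λ_k / β_k ) = − R*, where both the outer maximum and the inner minima are attained. -/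
open Finset

/-- The Lagrangian objective of the dual of the rate balancing problem, for fixed
multipliers `λ`. -/
noncomputable def dualObj {K B I : Type*} [Fintype K] [Fintype B] [Fintype I]
    (r : K → B → I → ℝ) (β : K → ℝ) (lam : K → ℝ) (α : K → B → I → ℝ) : ℝ :=
  -∑ k, ∑ b, ∑ i, α k b i * r k b i * lam k / β k

/-!
The inner minimum is attained because the feasible set `X` is a compact polytope, and weak
duality follows by evaluating the dual objective at an optimal point of the primal problem.
For the reverse inequality, map `X` to `(rate_k(α) / β_k - R*)_k ∈ ℝ^K`. The image is convex,
and by maximality of `R*` it misses the open positive orthant. A hyperplane separating the two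
has a normal with nonnegative coordinates; normalised to the simplex, it is a multiplier `λ`
whose inner minimum is exactly `-R*`.
-/

section Feasible

variable {K B I : Type*} [Fintype K] [Fintype I]

theorem convex_setOf_memX :
    Convex ℝ {p : (K → B → I → ℝ) × (I → ℝ) | memX p.1 p.2} := by
  rintro ⟨α, π⟩ ⟨hα, hπ, hαπ, hπ1⟩ ⟨α', π'⟩ ⟨hα', hπ', hαπ', hπ1'⟩ s t hs ht hst
  simp only [Set.mem_ofPred_eq, Prod.smul_mk, Prod.mk_add_mk, memX, Pi.add_apply,
    Pi.smul_apply, smul_eq_mul, Finset.sum_add_distrib, ← Finset.mul_sum]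
  refine ⟨fun k b i => ?_, fun i => ?_, fun b i => ?_, by rw [hπ1, hπ1']; simpa using hst⟩
  · have := hα k b i; have := hα' k b i; positivity
  · have := hπ i; have := hπ' i; positivity
  · gcongr
    exacts [hαπ b i, hαπ' b i]

theorem memX.le_pi {α : K → B → I → ℝ} {π : I → ℝ} (h : memX α π) (k : K) (b : B) (i : I) :
    α k b i ≤ π i :=
  (Finset.single_le_sum (fun k _ => h.1 k b i) (Finset.mem_univ k)).trans (h.2.2.1 b i)

theorem memX.pi_le_one {α : K → B → I → ℝ} {π : I → ℝ} (h : memX α π) (i : I) : π i ≤ 1 :=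
  h.2.2.2 ▸ Finset.single_le_sum (fun i _ => h.2.1 i) (Finset.mem_univ i)

end Feasible

theorem nonneg_of_forall_pos_lt_mul {a c : ℝ} (h : ∀ t > 0, c < t * a) : 0 ≤ a := by
  by_contra! ha
  have := h ((|c| + 1) / -a) (div_pos (by positivity) (neg_pos.2 ha))
  rw [div_mul_eq_mul_div, div_neg, mul_div_cancel_right₀ _ ha.ne] at this
  linarith [neg_abs_le c]

theorem exists_mem_stdSimplex_sum_mul_nonpos {K : Type*} [Fintype K] {T : Set (K → ℝ)}
    (hT : Convex ℝ T) (hTne : T.Nonempty) (hT0 : ∀ y ∈ T, ∃ k, y k ≤ 0) :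
    ∃ lam ∈ stdSimplex ℝ K, ∀ y ∈ T, ∑ k, lam k * y k ≤ 0 := by
  classical
  set U : Set (K → ℝ) := Set.univ.pi fun _ => Set.Ioi 0
  have hUT : Disjoint U T := Set.disjoint_left.2 fun y hyU hyT => by
    obtain ⟨k, hk⟩ := hT0 y hyT
    exact hk.not_gt (hyU k trivial)
  obtain ⟨f, u, hfU, hfT⟩ := geometric_hahn_banach_open (convex_pi fun _ _ => convex_Ioi 0)
    (isOpen_set_pi Set.finite_univ fun _ _ => isOpen_Ioi) hT hUT
  set e : K → K → ℝ := fun k j => if k = j then 1 else 0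
  set w : K → ℝ := fun k => -f (e k)
  have hf : ∀ y, f y = -∑ k, w k * y k := fun y => by
    simpa [w, e, mul_comm] using f.toLinearMap.pi_apply_eq_sum_univ y
  -- `U` is closed under adding positive vectors and under positive scaling; since `f < u` on
  -- `U`, this forces `w ≥ 0` and `u ≥ 0`.
  have hw : ∀ k, 0 ≤ w k := fun k => nonneg_of_forall_pos_lt_mul (c := f 1 - u) fun t ht => by
    have := hfU (1 + t • e k) fun j _ => by
      simp only [e, Set.mem_Ioi, Pi.add_apply, Pi.one_apply, Pi.smul_apply, smul_eq_mul]
      split_ifs <;> linarith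
    simp only [map_add, map_smul, smul_eq_mul] at this
    simp only [w]
    linarith
  have hu : 0 ≤ u := nonneg_of_forall_pos_lt_mul (c := f 1) fun t ht => by
    have := hfU (t⁻¹ • 1) fun j _ => by simp [ht]
    rwa [map_smul, smul_eq_mul, inv_mul_lt_iff₀ ht] at this
  have hwpos : 0 < ∑ k, w k := by
    refine (Finset.sum_nonneg fun k _ => hw k).lt_of_ne fun h0 => ?_
    have hw0 : ∀ k, w k = 0 := fun k =>
      (Finset.sum_eq_zero_iff_of_nonneg fun k _ => hw k).1 h0.symm k (Finset.mem_univ k)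
    obtain ⟨y₀, hy₀⟩ := hTne
    have h1 := hfU 1 fun j _ => Set.mem_Ioi.2 one_pos
    have h2 := hfT y₀ hy₀
    simp only [hf, hw0, zero_mul, Finset.sum_const_zero, neg_zero] at h1 h2
    linarith
  refine ⟨fun k => w k / ∑ j, w j, ⟨fun k => div_nonneg (hw k) hwpos.le, ?_⟩, fun y hy => ?_⟩
  · rw [← Finset.sum_div, div_self hwpos.ne']
  · have := hfT y hy
    rw [hf] at this
    simp only [div_mul_eq_mul_div, ← Finset.sum_div]
    exact div_nonpos_of_nonpos_of_nonneg (by linarith) hwpos.le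

section RateBalancing

open Topology

variable {K B I : Type*} [Fintype K] [Fintype B] [Fintype I]

def rate (r α : K → B → I → ℝ) (k : K) : ℝ := ∑ i, ∑ b, α k b i * r k b i

theorem dualObj_eq (r : K → B → I → ℝ) (β lam : K → ℝ) (α : K → B → I → ℝ) :
    dualObj r β lam α = -∑ k, lam k * (rate r α k / β k) := by
  rw [dualObj, neg_inj]
  refine Finset.sum_congr rfl fun k _ => ?_
  simp only [rate, Finset.sum_div, Finset.mul_sum]
  rw [Finset.sum_comm]
  exact Finset.sum_congr rfl fun b _ => Finset.sum_congr rfl fun i _ => by ring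

theorem exists_isLeast_dualObj (r : K → B → I → ℝ) (β lam : K → ℝ)
    (hX : ∃ (α : K → B → I → ℝ) (π : I → ℝ), memX α π) :
    ∃ m, IsLeast {v : ℝ | ∃ α π, memX α π ∧ v = dualObj r β lam α} m := by
  have hval : {v : ℝ | ∃ α π, memX α π ∧ v = dualObj r β lam α} =
      (fun p => dualObj r β lam p.1) '' {p : (K → B → I → ℝ) × (I → ℝ) | memX p.1 p.2} := by
    ext v
    simp [eq_comm]
  rw [hval]
  obtain ⟨α, π, h⟩ := hX
  exact (isCompact_setOf_memX.image (by unfold dualObj; fun_prop)).exists_isLeast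
    ⟨_, (α, π), h, rfl⟩

theorem dualObj_le_neg_of_le_rate {r α : K → B → I → ℝ} {β lam : K → ℝ} {R : ℝ}
    (hβ : ∀ k, 0 < β k) (hlam : lam ∈ stdSimplex ℝ K) (hR : ∀ k, β k * R ≤ rate r α k) :
    dualObj r β lam α ≤ -R := by
  rw [dualObj_eq, neg_le_neg_iff]
  calc R = ∑ k, lam k * R := by rw [← Finset.sum_mul, hlam.2, one_mul]
    _ ≤ ∑ k, lam k * (rate r α k / β k) := Finset.sum_le_sum fun k _ =>
      mul_le_mul_of_nonneg_left ((le_div_iff₀ (hβ k)).2 (by linarith [hR k])) (hlam.1 k)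

theorem exists_mem_stdSimplex_neg_le_dualObj (r : K → B → I → ℝ) {β : K → ℝ}
    (hβ : ∀ k, 0 < β k) {Rstar : ℝ}
    (hRstar : IsGreatest {R : ℝ | ∃ α π, memX α π ∧ ∀ k, β k * R ≤ rate r α k} Rstar) :
    ∃ lam ∈ stdSimplex ℝ K, ∀ α π, memX α π → -Rstar ≤ dualObj r β lam α := by
  set T : Set (K → ℝ) := (fun p k => rate r p.1 k / β k - Rstar) ''
    {p : (K → B → I → ℝ) × (I → ℝ) | memX p.1 p.2}
  have hT : Convex ℝ T := by
    rintro _ ⟨p, hp, rfl⟩ _ ⟨q, hq, rfl⟩ s t hs ht hst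
    refine ⟨s • p + t • q, convex_setOf_memX hp hq hs ht hst, funext fun k => ?_⟩
    simp only [rate, Prod.fst_add, Prod.smul_fst, Pi.add_apply, Pi.smul_apply, smul_eq_mul,
      add_mul, mul_assoc, Finset.sum_add_distrib, ← Finset.mul_sum]
    linear_combination Rstar * hst
  have hT0 : ∀ y ∈ T, ∃ k, y k ≤ 0 := by
    rintro _ ⟨⟨α, π⟩, hX, rfl⟩
    by_contra! hy
    obtain ⟨ε, hεy, hε⟩ := ((Filter.eventually_all.2 fun k => eventually_lt_nhds (hy k))
      |>.filter_mono nhdsWithin_le_nhds |>.and self_mem_nhdsWithin).exists (f := 𝓝[>] (0 : ℝ))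
    refine (lt_add_of_pos_right Rstar hε).not_ge (hRstar.2 ⟨α, π, hX, fun k => ?_⟩)
    have := hεy k
    rw [← le_div_iff₀' (hβ k)]
    linarith
  obtain ⟨lam, hlam, hsep⟩ := exists_mem_stdSimplex_sum_mul_nonpos hT
    (hRstar.1.elim fun α ⟨π, hX, _⟩ => ⟨_, (α, π), hX, rfl⟩) hT0
  refine ⟨lam, hlam, fun α π hX => ?_⟩
  have := hsep _ ⟨(α, π), hX, rfl⟩
  simp only [mul_sub, Finset.sum_sub_distrib, ← Finset.sum_mul, hlam.2, one_mul] at this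
  rw [dualObj_eq]
  linarith

end RateBalancing

theorem stmt_3_general {K B I : Type*} [Fintype K] [Fintype B] [Fintype I]
    (r : K → B → I → ℝ)
    (β : K → ℝ) (hβpos : ∀ k, 0 < β k)
    (Rstar : ℝ)
    (hRstar : IsGreatest {R : ℝ | ∃ α π, memX α π ∧
        ∀ k, β k * R ≤ ∑ i, ∑ b, α k b i * r k b i} Rstar) :
    (∀ lam : K → ℝ, (∀ k, 0 ≤ lam k) → ∑ k, lam k = 1 →
        ∃ m, IsLeast {v : ℝ | ∃ α π, memX α π ∧ v = dualObj r β lam α} m) ∧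
    IsGreatest {m : ℝ | ∃ lam : K → ℝ, (∀ k, 0 ≤ lam k) ∧ ∑ k, lam k = 1 ∧
        IsLeast {v : ℝ | ∃ α π, memX α π ∧ v = dualObj r β lam α} m} (-Rstar) := by
  obtain ⟨α₀, π₀, hX₀, hR₀⟩ := hRstar.1
  refine ⟨fun lam _ _ => exists_isLeast_dualObj r β lam ⟨α₀, π₀, hX₀⟩, ?_, ?_⟩
  · obtain ⟨lam, hlam, hle⟩ := exists_mem_stdSimplex_neg_le_dualObj r hβpos hRstar
    refine ⟨lam, hlam.1, hlam.2, ⟨α₀, π₀, hX₀, ?_⟩, ?_⟩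
    · exact le_antisymm (hle α₀ π₀ hX₀) (dualObj_le_neg_of_le_rate hβpos hlam hR₀)
    · rintro v ⟨α, π, hX, rfl⟩
      exact hle α π hX
  · rintro m ⟨lam, hlam₀, hlam₁, hm⟩
    exact (hm.2 ⟨α₀, π₀, hX₀, rfl⟩).trans (dualObj_le_neg_of_le_rate hβpos ⟨hlam₀, hlam₁⟩ hR₀)

/-- Strong duality for the rate balancing problem: the dual optimal value equals `−R*`,
with the outer maximum and all inner minima attained. -/
theorem stmt_3 {K B I : Type*} [Fintype K] [Fintype B] [Fintype I]
    [Nonempty K] [Nonempty B] [Nonempty I]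
    (r : K → B → I → ℝ) (hr : ∀ k b i, 0 ≤ r k b i)
    (β : K → ℝ) (hβpos : ∀ k, 0 < β k) (hβsum : ∑ k, β k = 1)
    (Rstar : ℝ)
    (hRstar : IsGreatest {R : ℝ | ∃ α π, memX α π ∧
        ∀ k, β k * R ≤ ∑ i, ∑ b, α k b i * r k b i} Rstar) :
    (∀ lam : K → ℝ, (∀ k, 0 ≤ lam k) → ∑ k, lam k = 1 →
        ∃ m, IsLeast {v : ℝ | ∃ α π, memX α π ∧ v = dualObj r β lam α} m) ∧
    IsGreatest {m : ℝ | ∃ lam : K → ℝ, (∀ k, 0 ≤ lam k) ∧ ∑ k, lam k = 1 ∧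
        IsLeast {v : ℝ | ∃ α π, memX α π ∧ v = dualObj r β lam α} m} (-Rstar) :=
  stmt_3_general r β hβpos Rstar hRstar
end

section
/- Let r̊_{kbi} ≤ 0 for all k, b, i. For each b ∈ B and i ∈ I choose k̄(b, i) ∈ argmin_{k ∈ K} r̊_{kbi}, and choose ī ∈ argmin_{i ∈ I} ∑_{b ∈ B} r̊_{k̄(b,i) b i}. Define π̄_i = 1 if i = ī and π̄_i = 0 otherwise, and ᾱ_{kbi} = 1 if i = ī and k = k̄(b, ī) and ᾱ_{kbi} = 0 otherwise. Then (ᾱ, π̄) ∈ X and (ᾱ, π̄) minimizes ∑_{k ∈ K} ∑_{b ∈ B} ∑_{i ∈ I} α_{kbi} r̊_{kbi} over all (α, π) ∈ X. -/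
/-!
For feasible `(α, π)`, the weights `α · b i` total at most `π i` and the smallest rate
`r (kbar b i) b i` is nonpositive, so `∑ k, α k b i * r k b i ≥ π i * r (kbar b i) b i`.
Summing over `b` leaves a `π`-weighted average of the per-pattern sums, which is at least
the sum at `ibar`; the pooled allocation attains exactly that value.
-/

open Finset

theorem le_sum_mul_of_le {ι : Type*} {s : Finset ι} {w f : ι → ℝ} {m : ℝ}
    (hw : ∀ i ∈ s, 0 ≤ w i) (hw₁ : ∑ i ∈ s, w i = 1) (hf : ∀ i ∈ s, m ≤ f i) :
    m ≤ ∑ i ∈ s, w i * f i :=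
  calc m = ∑ i ∈ s, w i * m := by rw [← sum_mul, hw₁, one_mul]
    _ ≤ ∑ i ∈ s, w i * f i :=
        sum_le_sum fun i hi => mul_le_mul_of_nonneg_left (hf i hi) (hw i hi)

theorem mul_le_sum_mul_of_sum_le {ι : Type*} {s : Finset ι} {a f : ι → ℝ} {p m : ℝ}
    (ha : ∀ i ∈ s, 0 ≤ a i) (hap : ∑ i ∈ s, a i ≤ p) (hm : m ≤ 0)
    (hf : ∀ i ∈ s, m ≤ f i) :
    p * m ≤ ∑ i ∈ s, a i * f i :=
  calc p * m ≤ (∑ i ∈ s, a i) * m := mul_le_mul_of_nonpos_right hap hm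
    _ = ∑ i ∈ s, a i * m := sum_mul ..
    _ ≤ ∑ i ∈ s, a i * f i :=
        sum_le_sum fun i hi => mul_le_mul_of_nonneg_left (hf i hi) (ha i hi)

section Pooled

variable {K B I : Type*} [Fintype K] [Fintype I] [DecidableEq K] [DecidableEq I]

def pooledAlloc (κ : B → K) (i₀ : I) : K → B → I → ℝ :=
  fun k b i => if i = i₀ ∧ k = κ b then 1 else 0

theorem memX_pooledAlloc (κ : B → K) (i₀ : I) :
    memX (pooledAlloc κ i₀) (Pi.single i₀ 1) := by
  refine ⟨fun k b i => ?_, fun i => ?_, fun b i => ?_, by simp⟩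
  · unfold pooledAlloc; split <;> norm_num
  · rw [Pi.single_apply]; split <;> norm_num
  · rw [Pi.single_apply]
    by_cases h : i = i₀ <;> simp [pooledAlloc, h]

theorem sum_pooledAlloc_mul [Fintype B] (κ : B → K) (i₀ : I) (r : K → B → I → ℝ) :
    ∑ k, ∑ b, ∑ i, pooledAlloc κ i₀ k b i * r k b i = ∑ b, r (κ b) b i₀ := by
  rw [sum_comm]
  refine sum_congr rfl fun b _ => ?_
  simp [pooledAlloc, ite_and, sum_ite_eq']

end Pooled

theorem sum_min_rate_le_of_memX {K B I : Type*} [Fintype K] [Fintype B] [Fintype I]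
    {r : K → B → I → ℝ} (hr : ∀ k b i, r k b i ≤ 0)
    {kbar : B → I → K} (hkbar : ∀ b i k, r (kbar b i) b i ≤ r k b i)
    {ibar : I} (hibar : ∀ i, ∑ b, r (kbar b ibar) b ibar ≤ ∑ b, r (kbar b i) b i)
    {α : K → B → I → ℝ} {π : I → ℝ} (hX : memX α π) :
    ∑ b, r (kbar b ibar) b ibar ≤ ∑ k, ∑ b, ∑ i, α k b i * r k b i := by
  obtain ⟨hα, hπ, hαπ, hπ₁⟩ := hX
  calc ∑ b, r (kbar b ibar) b ibar
      ≤ ∑ i, π i * ∑ b, r (kbar b i) b i :=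
        le_sum_mul_of_le (fun i _ => hπ i) hπ₁ fun i _ => hibar i
    _ = ∑ i, ∑ b, π i * r (kbar b i) b i := by simp only [mul_sum]
    _ ≤ ∑ i, ∑ b, ∑ k, α k b i * r k b i := by
        gcongr with i _ b _
        exact mul_le_sum_mul_of_sum_le (fun k _ => hα k b i) (hαπ b i) (hr _ _ _)
          fun k _ => hkbar b i k
    _ = ∑ k, ∑ b, ∑ i, α k b i * r k b i := by
        rw [sum_comm]
        exact (sum_congr rfl fun b _ => sum_comm).trans sum_comm

theorem stmt_4_general {K B I : Type*} [Fintype K] [Fintype B] [Fintype I]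
    [DecidableEq K] [DecidableEq I]
    (r : K → B → I → ℝ) (hr : ∀ k b i, r k b i ≤ 0)
    (kbar : B → I → K) (hkbar : ∀ b i k, r (kbar b i) b i ≤ r k b i)
    (ibar : I) (hibar : ∀ i, ∑ b, r (kbar b ibar) b ibar ≤ ∑ b, r (kbar b i) b i)
    (πbar : I → ℝ) (hπbar : ∀ i, πbar i = if i = ibar then 1 else 0)
    (αbar : K → B → I → ℝ)
    (hαbar : ∀ k b i, αbar k b i = if i = ibar ∧ k = kbar b ibar then 1 else 0) :
    memX αbar πbar ∧
      ∀ α π, memX α π →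
        ∑ k, ∑ b, ∑ i, αbar k b i * r k b i ≤ ∑ k, ∑ b, ∑ i, α k b i * r k b i := by
  obtain rfl : πbar = Pi.single ibar 1 := funext fun i => by rw [hπbar, Pi.single_apply]
  obtain rfl : αbar = pooledAlloc (fun b => kbar b ibar) ibar :=
    funext fun k => funext fun b => funext fun i => hαbar k b i
  refine ⟨memX_pooledAlloc _ _, fun α π hX => ?_⟩
  rw [sum_pooledAlloc_mul]
  exact sum_min_rate_le_of_memX hr hkbar hibar hX

/-- Closed-form solution of the inner minimization of the dual of the rate balancing
problem: pooling all resources to the best pattern `ī`, where each BS serves the single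
best user, is optimal. -/
theorem stmt_4 {K B I : Type*} [Fintype K] [Fintype B] [Fintype I]
    [Nonempty K] [Nonempty B] [Nonempty I] [DecidableEq K] [DecidableEq I]
    (r : K → B → I → ℝ) (hr : ∀ k b i, r k b i ≤ 0)
    (kbar : B → I → K) (hkbar : ∀ b i k, r (kbar b i) b i ≤ r k b i)
    (ibar : I) (hibar : ∀ i, ∑ b, r (kbar b ibar) b ibar ≤ ∑ b, r (kbar b i) b i)
    (πbar : I → ℝ) (hπbar : ∀ i, πbar i = if i = ibar then 1 else 0)
    (αbar : K → B → I → ℝ)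
    (hαbar : ∀ k b i, αbar k b i = if i = ibar ∧ k = kbar b ibar then 1 else 0) :
    memX αbar πbar ∧
      ∀ α π, memX α π →
        ∑ k, ∑ b, ∑ i, αbar k b i * r k b i ≤ ∑ k, ∑ b, ∑ i, α k b i * r k b i :=
  stmt_4_general r hr kbar hkbar ibar hibar πbar hπbar αbar hαbar
end

section
/- Let r̊_{kbi} ≤ 0 for all k, b, i. Then the minimum of ∑_{k ∈ K} ∑_{b ∈ B} ∑_{i ∈ I} α_{kbi} r̊_{kbi} over all (α, π) ∈ X equals min_{i ∈ I} ∑_{b ∈ B} min_{k ∈ K} r̊_{kbi}. -/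
/-
A feasible point spends at most `π_i` on each `(b, i)`, and since `r̊ ≤ 0` spending less only
raises the cost; so the objective is at least `∑_i π_i ∑_b min_k r̊_{kbi}`, a convex combination,
hence at least its smallest term. Putting all of `π` on a minimising `i` and, for each `b`, all
of the weight on a minimising `k` attains the bound.
-/

open Finset

section OrderedRing

variable {ι R : Type*} [CommRing R] [LinearOrder R] [IsStrictOrderedRing R]

theorem Finset.mul_le_sum_mul_of_sum_le_of_nonpos (s : Finset ι) {w r : ι → R} {p m : R}
    (hw : ∀ k ∈ s, 0 ≤ w k) (hsum : ∑ k ∈ s, w k ≤ p) (hm : m ≤ 0)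
    (hmr : ∀ k ∈ s, m ≤ r k) : p * m ≤ ∑ k ∈ s, w k * r k :=
  calc p * m ≤ (∑ k ∈ s, w k) * m := mul_le_mul_of_nonpos_right hsum hm
    _ = ∑ k ∈ s, w k * m := sum_mul _ _ _
    _ ≤ ∑ k ∈ s, w k * r k :=
      sum_le_sum fun k hk => mul_le_mul_of_nonneg_left (hmr k hk) (hw k hk)

theorem Finset.inf'_le_sum_mul_of_sum_eq_one (s : Finset ι) (hs : s.Nonempty) {π f : ι → R}
    (hπ : ∀ i ∈ s, 0 ≤ π i) (hπ1 : ∑ i ∈ s, π i = 1) : s.inf' hs f ≤ ∑ i ∈ s, π i * f i :=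
  calc s.inf' hs f = ∑ i ∈ s, π i * s.inf' hs f := by rw [← sum_mul, hπ1, one_mul]
    _ ≤ ∑ i ∈ s, π i * f i :=
      sum_le_sum fun i hi => mul_le_mul_of_nonneg_left (inf'_le f hi) (hπ i hi)

end OrderedRing

section MemX

variable {K B I : Type*} [Fintype K] [Fintype I]

theorem inf'_le_objective_of_memX [Fintype B] [Nonempty K] [Nonempty I] {r : K → B → I → ℝ}
    (hr : ∀ k b i, r k b i ≤ 0) {α : K → B → I → ℝ} {π : I → ℝ} (h : memX α π) :
    univ.inf' univ_nonempty (fun i => ∑ b, univ.inf' univ_nonempty (fun k => r k b i)) ≤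
      ∑ k, ∑ b, ∑ i, α k b i * r k b i := by
  obtain ⟨hα, hπ, hsum, hπ1⟩ := h
  have hmin_nonpos (b : B) (i : I) : univ.inf' univ_nonempty (fun k => r k b i) ≤ 0 :=
    (inf'_le _ (mem_univ (Classical.arbitrary K))).trans (hr _ b i)
  calc _ ≤ ∑ i, π i * ∑ b, univ.inf' univ_nonempty (fun k => r k b i) :=
        inf'_le_sum_mul_of_sum_eq_one _ _ (fun i _ => hπ i) hπ1
    _ ≤ ∑ i, ∑ b, ∑ k, α k b i * r k b i := by
        refine sum_le_sum fun i _ => ?_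
        rw [mul_sum]
        exact sum_le_sum fun b _ => mul_le_sum_mul_of_sum_le_of_nonpos _
          (fun k _ => hα k b i) (hsum b i) (hmin_nonpos b i) fun k _ => inf'_le _ (mem_univ k)
    _ = ∑ k, ∑ b, ∑ i, α k b i * r k b i := by
        rw [sum_comm, sum_congr rfl fun b _ => sum_comm, sum_comm]

variable [DecidableEq K]

def assignment (κ : B → I → K) (π : I → ℝ) : K → B → I → ℝ :=
  fun k b i => if k = κ b i then π i else 0

theorem memX_assignment (κ : B → I → K) {π : I → ℝ} (hπ : 0 ≤ π)
    (hπ1 : ∑ i, π i = 1) : memX (assignment κ π) π :=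
  ⟨fun k b i => by unfold assignment; split_ifs; exacts [hπ i, le_rfl],
    hπ, fun b i => by simp [assignment], hπ1⟩

theorem objective_assignment [Fintype B] (κ : B → I → K) (π : I → ℝ) (r : K → B → I → ℝ) :
    ∑ k, ∑ b, ∑ i, assignment κ π k b i * r k b i = ∑ i, π i * ∑ b, r (κ b i) b i := by
  rw [sum_comm, sum_congr rfl fun b _ => sum_comm, sum_comm]
  simp [assignment, ite_mul, mul_sum]

end MemX

theorem stmt_5_general {K B I : Type*} [Fintype K] [Fintype B] [Fintype I]
    [Nonempty K] [Nonempty I]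
    (r : K → B → I → ℝ) (hr : ∀ k b i, r k b i ≤ 0) :
    IsLeast {v : ℝ | ∃ α π, memX α π ∧ v = ∑ k, ∑ b, ∑ i, α k b i * r k b i}
      (univ.inf' univ_nonempty
        (fun i => ∑ b, univ.inf' univ_nonempty (fun k => r k b i))) := by
  classical
  refine ⟨?_, fun v ⟨α, π, hX, hv⟩ => hv ▸ inf'_le_objective_of_memX hr hX⟩
  obtain ⟨i₀, -, hi₀⟩ := exists_mem_eq_inf' univ_nonempty
    (fun i => ∑ b, univ.inf' univ_nonempty (fun k => r k b i))
  choose κ _ hκ using fun b i => exists_mem_eq_inf' univ_nonempty (fun k => r k b i)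
  refine ⟨assignment κ (Pi.single i₀ 1), Pi.single i₀ 1,
    memX_assignment κ (Pi.single_nonneg.2 zero_le_one) (by simp), ?_⟩
  rw [objective_assignment, hi₀]
  simp [hκ, Pi.single_apply, ite_mul]

/-- For nonpositive weights, the minimum of the linear objective over `X` equals
`min_i ∑_b min_k r̊_{kbi}`. -/
theorem stmt_5 {K B I : Type*} [Fintype K] [Fintype B] [Fintype I]
    [Nonempty K] [Nonempty B] [Nonempty I]
    (r : K → B → I → ℝ) (hr : ∀ k b i, r k b i ≤ 0) :
    IsLeast {v : ℝ | ∃ α π, memX α π ∧ v = ∑ k, ∑ b, ∑ i, α k b i * r k b i}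
      (univ.inf' univ_nonempty
        (fun i => ∑ b, univ.inf' univ_nonempty (fun k => r k b i))) :=
  stmt_5_general r hr
end

section
/- Let w_b ∈ ℝ for b ∈ B, μ_k ∈ ℝ for k ∈ K, r_{kbi} ∈ ℝ, and set r̃_{kbi} = w_b − r_{kbi} μ_k. For each b and i choose k̄(b, i) ∈ argmin_{k ∈ K} r̃_{kbi}, and choose ī ∈ argmin_{i ∈ I} ∑_{b ∈ B} min(0, r̃_{k̄(b,i) b i}). Define π̄_i = 1 if i = ī and 0 otherwise, and ᾱ_{kbi} = 1 if i = ī, k = k̄(b, ī) and r̃_{kbi} < 0, and ᾱ_{kbi} = 0 otherwise. Then (ᾱ, π̄) ∈ X, it minimizes ∑_{k,b,i} α_{kbi} r̃_{kbi} over all (α, π) ∈ X, and the minimum value equals min_{i ∈ I} ∑_{b ∈ B} min(0, min_{k ∈ K} r̃_{kbi}). -/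
/-!
Weak duality: for any feasible `(α, π)`, the cost charged to the pair `(b, i)` is at least `π i * min 0 (min_k r̃_{kbi})`, because the capacity `π i` is
spread over nonnegative weights; summing over `b` and then averaging over `i` with the
probability vector `π` gives the lower bound `min_i ∑_b min 0 (min_k r̃_{kbi})`. The point
`(ᾱ, π̄)` puts all mass on the minimizing pattern `ī` and, inside it, on the cheapest test
point of each cell exactly when its reduced cost is negative, so it attains the bound.
-/

open Finset

theorem Finset.inf'_eq_of_forall_le {ι α : Type*} [SemilatticeInf α] {s : Finset ι}
    (H : s.Nonempty) {f : ι → α} {a : ι} (ha : a ∈ s) (h : ∀ x ∈ s, f a ≤ f x) :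
    s.inf' H f = f a :=
  le_antisymm (inf'_le f ha) (le_inf' H f h)

theorem mul_min_zero_le_sum_mul {K : Type*} [Fintype K] {a c : K → ℝ} {p m : ℝ}
    (ha : ∀ k, 0 ≤ a k) (hap : ∑ k, a k ≤ p) (hm : ∀ k, m ≤ c k) :
    p * min 0 m ≤ ∑ k, a k * c k :=
  calc p * min 0 m ≤ (∑ k, a k) * min 0 m := mul_le_mul_of_nonpos_right hap (min_le_left _ _)
    _ = ∑ k, a k * min 0 m := sum_mul _ _ _
    _ ≤ ∑ k, a k * c k :=
      sum_le_sum fun k _ => mul_le_mul_of_nonneg_left ((min_le_right _ _).trans (hm k)) (ha k)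

theorem le_sum_mul_of_forall_le {I : Type*} [Fintype I] {π f : I → ℝ} {v : ℝ}
    (hπ : ∀ i, 0 ≤ π i) (hπ_sum : ∑ i, π i = 1) (hv : ∀ i, v ≤ f i) :
    v ≤ ∑ i, π i * f i :=
  calc v = ∑ i, π i * v := by rw [← sum_mul, hπ_sum, one_mul]
    _ ≤ ∑ i, π i * f i := sum_le_sum fun i _ => mul_le_mul_of_nonneg_left (hv i) (hπ i)

section Vertex

variable {K B I : Type*} [Fintype K] [Fintype I]

theorem le_sum_mul_of_memX [Fintype B] {α c : K → B → I → ℝ} {π : I → ℝ} (hX : memX α π)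
    {m : B → I → ℝ} (hm : ∀ b i k, m b i ≤ c k b i) {v : ℝ}
    (hv : ∀ i, v ≤ ∑ b, min 0 (m b i)) :
    v ≤ ∑ k, ∑ b, ∑ i, α k b i * c k b i := by
  obtain ⟨hα, hπ, hcap, hπ_sum⟩ := hX
  calc v ≤ ∑ i, π i * ∑ b, min 0 (m b i) := le_sum_mul_of_forall_le hπ hπ_sum hv
    _ = ∑ i, ∑ b, π i * min 0 (m b i) := by simp only [mul_sum]
    _ ≤ ∑ i, ∑ b, ∑ k, α k b i * c k b i :=
      sum_le_sum fun i _ => sum_le_sum fun b _ =>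
        mul_min_zero_le_sum_mul (fun k => hα k b i) (hcap b i) (fun k => hm b i k)
    _ = ∑ k, ∑ b, ∑ i, α k b i * c k b i := by
      rw [sum_comm]
      refine (sum_congr rfl fun b _ => sum_comm).trans sum_comm

variable [DecidableEq K] [DecidableEq I]

noncomputable def vertexAlpha (c : K → B → I → ℝ) (kbar : B → I → K) (ibar : I) : K → B → I → ℝ :=
  fun k b i => if i = ibar ∧ k = kbar b ibar ∧ c k b i < 0 then 1 else 0

def vertexPi (ibar : I) : I → ℝ := fun i => if i = ibar then 1 else 0

theorem memX_vertex (c : K → B → I → ℝ) (kbar : B → I → K) (ibar : I) :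
    memX (vertexAlpha c kbar ibar) (vertexPi ibar) := by
  refine ⟨fun k b i => ?_, fun i => ?_, fun b i => ?_, ?_⟩
  · unfold vertexAlpha; split_ifs <;> norm_num
  · unfold vertexPi; split_ifs <;> norm_num
  · rw [sum_eq_single (kbar b ibar) (fun k _ hk => by simp [vertexAlpha, hk]) (by simp)]
    unfold vertexAlpha vertexPi
    split_ifs <;> simp_all
  · simp [vertexPi]

theorem sum_vertexAlpha_mul [Fintype B] (c : K → B → I → ℝ) (kbar : B → I → K) (ibar : I) :
    ∑ k, ∑ b, ∑ i, vertexAlpha c kbar ibar k b i * c k b i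
      = ∑ b, min 0 (c (kbar b ibar) b ibar) := by
  rw [sum_comm]
  refine sum_congr rfl fun b _ => ?_
  rw [sum_eq_single (kbar b ibar) (fun k _ hk => by simp [vertexAlpha, hk]) (by simp),
    sum_eq_single ibar (fun i _ hi => by simp [vertexAlpha, hi]) (by simp)]
  by_cases hneg : c (kbar b ibar) b ibar < 0
  · simp [vertexAlpha, hneg, min_eq_right hneg.le]
  · simp [vertexAlpha, hneg, min_eq_left (not_lt.1 hneg)]

end Vertex

theorem stmt_7_general {K B I : Type*} [Fintype K] [Fintype B] [Fintype I]
    [Nonempty K] [Nonempty I] [DecidableEq K] [DecidableEq I]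
    (rt : K → B → I → ℝ)
    (kbar : B → I → K) (hkbar : ∀ b i k, rt (kbar b i) b i ≤ rt k b i)
    (ibar : I)
    (hibar : ∀ i, ∑ b, min 0 (rt (kbar b ibar) b ibar) ≤ ∑ b, min 0 (rt (kbar b i) b i))
    (πbar : I → ℝ) (hπbar : ∀ i, πbar i = if i = ibar then 1 else 0)
    (αbar : K → B → I → ℝ)
    (hαbar : ∀ k b i, αbar k b i =
      if i = ibar ∧ k = kbar b ibar ∧ rt k b i < 0 then 1 else 0) :
    memX αbar πbar ∧
    (∀ α π, memX α π →
      ∑ k, ∑ b, ∑ i, αbar k b i * rt k b i ≤ ∑ k, ∑ b, ∑ i, α k b i * rt k b i) ∧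
    (∑ k, ∑ b, ∑ i, αbar k b i * rt k b i
      = univ.inf' univ_nonempty
          (fun i => ∑ b, min 0 (univ.inf' univ_nonempty (fun k => rt k b i)))) := by
  obtain rfl : αbar = vertexAlpha rt kbar ibar := funext₃ hαbar
  obtain rfl : πbar = vertexPi ibar := funext hπbar
  have hinf : ∀ b i, univ.inf' univ_nonempty (fun k => rt k b i) = rt (kbar b i) b i :=
    fun b i => inf'_eq_of_forall_le _ (mem_univ _) fun k _ => hkbar b i k
  refine ⟨memX_vertex rt kbar ibar, fun α π hX => ?_, ?_⟩
  · rw [sum_vertexAlpha_mul]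
    exact le_sum_mul_of_memX hX hkbar hibar
  · simp only [sum_vertexAlpha_mul, hinf]
    exact (inf'_eq_of_forall_le _ (f := fun i => ∑ b, min 0 (rt (kbar b i) b i)) (mem_univ ibar)
      fun i _ => hibar i).symm

/-- Closed-form solution of the inner minimization of the dual of the reweighted ℓ1
energy-saving problem, with reduced costs `r̃_{kbi} = w_b − r_{kbi} μ_k`. -/
theorem stmt_7 {K B I : Type*} [Fintype K] [Fintype B] [Fintype I]
    [Nonempty K] [Nonempty B] [Nonempty I] [DecidableEq K] [DecidableEq I]
    (w : B → ℝ) (μ : K → ℝ) (r : K → B → I → ℝ)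
    (rt : K → B → I → ℝ) (hrt : ∀ k b i, rt k b i = w b - r k b i * μ k)
    (kbar : B → I → K) (hkbar : ∀ b i k, rt (kbar b i) b i ≤ rt k b i)
    (ibar : I)
    (hibar : ∀ i, ∑ b, min 0 (rt (kbar b ibar) b ibar) ≤ ∑ b, min 0 (rt (kbar b i) b i))
    (πbar : I → ℝ) (hπbar : ∀ i, πbar i = if i = ibar then 1 else 0)
    (αbar : K → B → I → ℝ)
    (hαbar : ∀ k b i, αbar k b i =
      if i = ibar ∧ k = kbar b ibar ∧ rt k b i < 0 then 1 else 0) :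
    memX αbar πbar ∧
    (∀ α π, memX α π →
      ∑ k, ∑ b, ∑ i, αbar k b i * rt k b i ≤ ∑ k, ∑ b, ∑ i, α k b i * rt k b i) ∧
    (∑ k, ∑ b, ∑ i, αbar k b i * rt k b i
      = univ.inf' univ_nonempty
          (fun i => ∑ b, min 0 (univ.inf' univ_nonempty (fun k => rt k b i)))) :=
  stmt_7_general rt kbar hkbar ibar hibar πbar hπbar αbar hαbar
end

section
/- For each b ∈ B let K_b ⊆ K be given, and define effective rates r^RE_{kbi} = r_{kbi} if k ∈ K_b and r^RE_{kbi} = 0 otherwise. Consider problem (Q): minimize P^tot over α ≥ 0, π ≥ 0 with ρ_b = ∑_{k ∈ K_b} ∑_{i ∈ I} α_{kbi}, subject to ∑_{i ∈ I} ∑_{b ∈ B} α_{kbi} r^RE_{kbi} ≥ d_k for all k ∈ K, ∑_{k ∈ K_b} α_{kbi} ≤ π_i for all b, i, and ∑_{i ∈ I} π_i = 1; and problem (Q'): the same problem with K_b replaced by K in both the definition of ρ_b and the per-cell resource constraints. Then the infima of (Q) and (Q') are equal, and any optimal solution (α*, π*) of (Q') is feasible for (Q) and attains the infimum of (Q). 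-/
/-!
Since `r^RE_{kbi} = 0` for `k ∉ K_b`, only users in `K_b` get any rate from station `b`. Hence
zeroing the allocation `α_{kbi}` outside `K_b` turns a feasible point of (Q) into a feasible
point of (Q') with the same usages, while a feasible point of (Q') is feasible for (Q) with
smaller usages. As the power is monotone in the usages, both problems reach the same values,
and an optimum of (Q') is optimal for (Q).
-/

open Finset

section RangeExpansion

variable {K B I : Type*} [Fintype K] [Fintype B] [Fintype I]

/-- Feasibility for the energy-saving problem with fixed range-expansion association,
where the per-cell sums run over a given subset `Kb b ⊆ K` of allowed users. -/
def FeasRE (Kb : B → Finset K) (rRE : K → B → I → ℝ) (d : K → ℝ)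
    (α : K → B → I → ℝ) (π : I → ℝ) : Prop :=
  (∀ k b i, 0 ≤ α k b i) ∧ (∀ i, 0 ≤ π i) ∧
    (∀ b i, ∑ k ∈ Kb b, α k b i ≤ π i) ∧ (∑ i, π i = 1) ∧
    (∀ k, d k ≤ ∑ i, ∑ b, α k b i * rRE k b i)

/-- Usage of base station `b`, summed over the allowed users `Kb b`. -/
def ρRE (Kb : B → Finset K) (α : K → B → I → ℝ) (b : B) : ℝ :=
  ∑ k ∈ Kb b, ∑ i, α k b i

/-- Total network power consumption, with usages computed over the allowed users. -/
noncomputable def PtotRE (P q : B → ℝ) (Kb : B → Finset K) (α : K → B → I → ℝ) : ℝ :=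
  ∑ b, P b * ((1 - q b) * ρRE Kb α b + q b * (if ρRE Kb α b ≠ 0 then (1 : ℝ) else 0))

end RangeExpansion

section Restriction

variable {K B I : Type*} [Fintype I]

theorem ρRE_nonneg (Kb : B → Finset K) {α : K → B → I → ℝ} (hα : ∀ k b i, 0 ≤ α k b i)
    (b : B) : 0 ≤ ρRE Kb α b :=
  sum_nonneg fun k _ => sum_nonneg fun i _ => hα k b i

theorem ρRE_mono {Kb Kb' : B → Finset K} (hsub : ∀ b, Kb b ⊆ Kb' b)
    {α : K → B → I → ℝ} (hα : ∀ k b i, 0 ≤ α k b i) (b : B) :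
    ρRE Kb α b ≤ ρRE Kb' α b :=
  sum_le_sum_of_subset_of_nonneg (hsub b) fun k _ _ => sum_nonneg fun i _ => hα k b i

variable [Fintype B] {P q : B → ℝ} (hP : ∀ b, 0 ≤ P b) (hq₀ : ∀ b, 0 ≤ q b) (hq₁ : ∀ b, q b ≤ 1)
include hP hq₀ hq₁

theorem PtotRE_mono {Kb Kb' : B → Finset K} (hsub : ∀ b, Kb b ⊆ Kb' b)
    {α : K → B → I → ℝ} (hα : ∀ k b i, 0 ≤ α k b i) :
    PtotRE P q Kb α ≤ PtotRE P q Kb' α := by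
  refine sum_le_sum fun b _ => mul_le_mul_of_nonneg_left (add_le_add ?_ ?_) (hP b)
  · exact mul_le_mul_of_nonneg_left (ρRE_mono hsub hα b) (sub_nonneg.2 (hq₁ b))
  · refine mul_le_mul_of_nonneg_left ?_ (hq₀ b)
    have hρ := ρRE_mono hsub hα b
    have hρ₀ := ρRE_nonneg Kb hα b
    by_cases h : ρRE Kb α b = 0
    · simp only [h, ne_eq, not_true_eq_false, if_false]
      split_ifs <;> norm_num
    · have h' : ρRE Kb' α b ≠ 0 := ((lt_of_le_of_ne hρ₀ (Ne.symm h)).trans_le hρ).ne'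
      simp [h, h']

omit hP hq₀ hq₁

theorem FeasRE.mono {Kb Kb' : B → Finset K} (hsub : ∀ b, Kb b ⊆ Kb' b)
    {rRE : K → B → I → ℝ} {d : K → ℝ} {α : K → B → I → ℝ} {π : I → ℝ}
    (h : FeasRE Kb' rRE d α π) : FeasRE Kb rRE d α π := by
  obtain ⟨hα, hπ, hcell, hπ₁, hdem⟩ := h
  refine ⟨hα, hπ, fun b i => le_trans ?_ (hcell b i), hπ₁, hdem⟩
  exact sum_le_sum_of_subset_of_nonneg (hsub b) fun k _ _ => hα k b i

variable [Fintype K] [DecidableEq K]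

def restrictRE (Kb : B → Finset K) (α : K → B → I → ℝ) : K → B → I → ℝ :=
  fun k b i => if k ∈ Kb b then α k b i else 0

omit [Fintype B] in
theorem ρRE_univ_restrictRE (Kb : B → Finset K) (α : K → B → I → ℝ) (b : B) :
    ρRE (fun _ => univ) (restrictRE Kb α) b = ρRE Kb α b := by
  simp only [ρRE, restrictRE, ← ite_sum_zero]
  rw [sum_ite_mem, univ_inter]

theorem PtotRE_univ_restrictRE (P q : B → ℝ) (Kb : B → Finset K) (α : K → B → I → ℝ) :
    PtotRE P q (fun _ => univ) (restrictRE Kb α) = PtotRE P q Kb α := by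
  simp only [PtotRE, ρRE_univ_restrictRE]

theorem FeasRE.univ_restrictRE {Kb : B → Finset K} {rRE : K → B → I → ℝ}
    (hrRE : ∀ k b i, k ∉ Kb b → rRE k b i = 0) {d : K → ℝ} {α : K → B → I → ℝ}
    {π : I → ℝ} (h : FeasRE Kb rRE d α π) :
    FeasRE (fun _ => univ) rRE d (restrictRE Kb α) π := by
  obtain ⟨hα, hπ, hcell, hπ₁, hdem⟩ := h
  refine ⟨fun k b i => ?_, hπ, fun b i => ?_, hπ₁, fun k => (hdem k).trans_eq ?_⟩
  · unfold restrictRE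
    split_ifs <;> simp [hα]
  · simpa only [restrictRE, sum_ite_mem, univ_inter] using hcell b i
  · refine sum_congr rfl fun i _ => sum_congr rfl fun b _ => ?_
    by_cases hk : k ∈ Kb b <;> simp [restrictRE, hk, hrRE]

end Restriction

theorem stmt_9_general {K B I : Type*} [Fintype K] [Fintype B] [Fintype I]
    [DecidableEq K]
    (P q : B → ℝ) (hP : ∀ b, 0 < P b) (hq : ∀ b, 0 < q b ∧ q b ≤ 1)
    (r : K → B → I → ℝ) (d : K → ℝ)
    (Kb : B → Finset K)
    (rRE : K → B → I → ℝ) (hrRE : ∀ k b i, rRE k b i = if k ∈ Kb b then r k b i else 0) :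
    (sInf {v : ℝ | ∃ α π, FeasRE Kb rRE d α π ∧ v = PtotRE P q Kb α}
      = sInf {v : ℝ | ∃ α π, FeasRE (fun _ => (univ : Finset K)) rRE d α π ∧
          v = PtotRE P q (fun _ => (univ : Finset K)) α}) ∧
    (∀ αs πs, FeasRE (fun _ => (univ : Finset K)) rRE d αs πs →
      (∀ α π, FeasRE (fun _ => (univ : Finset K)) rRE d α π →
        PtotRE P q (fun _ => (univ : Finset K)) αs
          ≤ PtotRE P q (fun _ => (univ : Finset K)) α) →
      FeasRE Kb rRE d αs πs ∧
        PtotRE P q Kb αs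
          = sInf {v : ℝ | ∃ α π, FeasRE Kb rRE d α π ∧ v = PtotRE P q Kb α}) := by
  have hP₀ b := (hP b).le
  have hq₀ b := (hq b).1.le
  have hq₁ b := (hq b).2
  have hsub (b : B) : Kb b ⊆ univ := subset_univ _
  have hrRE_zero k b i (hk : k ∉ Kb b) : rRE k b i = 0 := by simp [hrRE, hk]
  refine ⟨?_, fun αs πs hfeas hopt => ⟨hfeas.mono hsub, ?_⟩⟩
  · refine csInf_eq_csInf_of_forall_exists_le ?_ ?_
    · rintro _ ⟨α, π, hf, rfl⟩
      exact ⟨_, ⟨restrictRE Kb α, π, hf.univ_restrictRE hrRE_zero, rfl⟩,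
        (PtotRE_univ_restrictRE P q Kb α).le⟩
    · rintro _ ⟨α, π, hf, rfl⟩
      exact ⟨_, ⟨α, π, hf.mono hsub, rfl⟩, PtotRE_mono hP₀ hq₀ hq₁ hsub hf.1⟩
  · symm
    refine IsLeast.csInf_eq ⟨⟨αs, πs, hfeas.mono hsub, rfl⟩, ?_⟩
    rintro _ ⟨α, π, hf, rfl⟩
    calc PtotRE P q Kb αs ≤ PtotRE P q (fun _ => univ) αs :=
          PtotRE_mono hP₀ hq₀ hq₁ hsub hfeas.1
      _ ≤ PtotRE P q (fun _ => univ) (restrictRE Kb α) := hopt _ π (hf.univ_restrictRE hrRE_zero)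
      _ = PtotRE P q Kb α := PtotRE_univ_restrictRE P q Kb α

/-- Replacing the restricted user sets `K_b` with the full set `K` in the fixed-association
energy-saving problem does not change the optimal value: the infima of (Q) and (Q') agree,
and any optimal solution of (Q') is feasible for (Q) and attains the infimum of (Q). -/
theorem stmt_9 {K B I : Type*} [Fintype K] [Fintype B] [Fintype I]
    [Nonempty K] [Nonempty B] [Nonempty I] [DecidableEq K]
    (P q : B → ℝ) (hP : ∀ b, 0 < P b) (hq : ∀ b, 0 < q b ∧ q b ≤ 1)
    (r : K → B → I → ℝ) (hr : ∀ k b i, 0 ≤ r k b i) (d : K → ℝ)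
    (Kb : B → Finset K)
    (rRE : K → B → I → ℝ) (hrRE : ∀ k b i, rRE k b i = if k ∈ Kb b then r k b i else 0) :
    (sInf {v : ℝ | ∃ α π, FeasRE Kb rRE d α π ∧ v = PtotRE P q Kb α}
      = sInf {v : ℝ | ∃ α π, FeasRE (fun _ => (univ : Finset K)) rRE d α π ∧
          v = PtotRE P q (fun _ => (univ : Finset K)) α}) ∧
    (∀ αs πs, FeasRE (fun _ => (univ : Finset K)) rRE d αs πs →
      (∀ α π, FeasRE (fun _ => (univ : Finset K)) rRE d α π →
        PtotRE P q (fun _ => (univ : Finset K)) αs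
          ≤ PtotRE P q (fun _ => (univ : Finset K)) α) →
      FeasRE Kb rRE d αs πs ∧
        PtotRE P q Kb αs
          = sInf {v : ℝ | ∃ α π, FeasRE Kb rRE d α π ∧ v = PtotRE P q Kb α}) :=
  stmt_9_general P q hP hq r d Kb rRE hrRE
end

section
/- Fix ε > 0, P_b > 0 and q_b ∈ (0,1] for each b ∈ B, and let Y be the set of (α, π) ∈ X satisfying ∑_{i ∈ I} ∑_{b ∈ B} α_{kbi} r_{kbi} ≥ d_k for all k ∈ K. Define F(α) = ∑_{b ∈ B} P_b [ (1 − q_b) ρ_b(α) + q_b log(ε + ρ_b(α)) / log(1 + ε^{−1}) ]. Given (α⁰, π⁰) ∈ Y, define the weights w_b = (1 − q_b) P_b + q_b P_b / ( log(1 + ε^{−1}) (ε + ρ_b(α⁰)) ). If (α⁺, π⁺) minimizes ∑_{b ∈ B} w_b ρ_b(α) over Y, then F(α⁺) ≤ F(α⁰). -/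
open Finset

/-!
`log` is concave, so it lies below its tangent line at the current usage `ρ_b(α⁰)`. Hence each
summand of `F` is majorized by its value at `α⁰` plus `w_b (ρ_b(α) - ρ_b(α⁰))`, with equality at
`α⁰`. Since `α⁰` is feasible, the minimizer `α⁺` of `∑ w_b ρ_b` makes the total increment
nonpositive, so `F(α⁺) ≤ F(α⁰)`.
-/

theorem Real.log_le_log_add_sub_div {x y : ℝ} (hx : 0 < x) (hy : 0 < y) :
    Real.log y ≤ Real.log x + (y - x) / x := by
  have h := Real.log_le_sub_one_of_pos (div_pos hy hx)
  rw [Real.log_div hy.ne' hx.ne', div_sub_one hx.ne'] at h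
  linarith

theorem Finset.sum_le_sum_of_le_add_mul_sub {ι : Type*} (s : Finset ι) {f g w x y : ι → ℝ}
    (hfg : ∀ i ∈ s, f i ≤ g i + w i * (y i - x i))
    (hwy : ∑ i ∈ s, w i * y i ≤ ∑ i ∈ s, w i * x i) :
    ∑ i ∈ s, f i ≤ ∑ i ∈ s, g i :=
  calc ∑ i ∈ s, f i ≤ ∑ i ∈ s, (g i + w i * (y i - x i)) := sum_le_sum hfg
    _ = ∑ i ∈ s, g i + (∑ i ∈ s, w i * y i - ∑ i ∈ s, w i * x i) := by
      simp only [mul_sub, sum_add_distrib, sum_sub_distrib]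
    _ ≤ ∑ i ∈ s, g i := by linarith

theorem ρ_nonneg {K B I : Type*} [Fintype K] [Fintype I] {α : K → B → I → ℝ} {π : I → ℝ}
    (h : memX α π) (b : B) : 0 ≤ ρ α b :=
  sum_nonneg fun k _ => sum_nonneg fun i _ => h.1 k b i

/-- The weight `(1 - q) P + q P / (L (ε + x))` is the derivative of the left-hand side at `x`. -/
theorem surrogate_le_add_weight_mul_sub {ε P q L x y : ℝ} (hx : 0 < ε + x) (hy : 0 < ε + y)
    (hP : 0 ≤ P) (hq : 0 ≤ q) (hL : 0 ≤ L) :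
    P * ((1 - q) * y + q * Real.log (ε + y) / L)
      ≤ P * ((1 - q) * x + q * Real.log (ε + x) / L)
        + ((1 - q) * P + q * P / (L * (ε + x))) * (y - x) := by
  have hc : 0 ≤ q * P / L := div_nonneg (mul_nonneg hq hP) hL
  have htangent := mul_le_mul_of_nonneg_left (Real.log_le_log_add_sub_div hx hy) hc
  rw [add_sub_add_left_eq_sub] at htangent
  calc P * ((1 - q) * y + q * Real.log (ε + y) / L)
      = P * (1 - q) * y + q * P / L * Real.log (ε + y) := by ring
    _ ≤ P * (1 - q) * y + q * P / L * (Real.log (ε + x) + (y - x) / (ε + x)) := by linarith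
    _ = P * ((1 - q) * x + q * Real.log (ε + x) / L)
        + ((1 - q) * P + q * P / (L * (ε + x))) * (y - x) := by
      rw [div_mul_eq_div_div]; ring

theorem stmt_10_general {K B I : Type*} [Fintype K] [Fintype B] [Fintype I]
    (ε : ℝ) (hε : 0 < ε)
    (P q : B → ℝ) (hP : ∀ b, 0 < P b) (hq : ∀ b, 0 < q b ∧ q b ≤ 1)
    (r : K → B → I → ℝ) (d : K → ℝ)
    (F : (K → B → I → ℝ) → ℝ)
    (hF : ∀ α, F α = ∑ b, P b * ((1 - q b) * ρ α b
        + q b * Real.log (ε + ρ α b) / Real.log (1 + ε⁻¹)))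
    (α0 : K → B → I → ℝ) (π0 : I → ℝ)
    (h0 : memX α0 π0 ∧ ∀ k, d k ≤ ∑ i, ∑ b, α0 k b i * r k b i)
    (w : B → ℝ)
    (hw : ∀ b, w b = (1 - q b) * P b
        + q b * P b / (Real.log (1 + ε⁻¹) * (ε + ρ α0 b)))
    (αp : K → B → I → ℝ) (πp : I → ℝ)
    (hp : memX αp πp ∧ ∀ k, d k ≤ ∑ i, ∑ b, αp k b i * r k b i)
    (hmin : ∀ α π, memX α π → (∀ k, d k ≤ ∑ i, ∑ b, α k b i * r k b i) →
      ∑ b, w b * ρ αp b ≤ ∑ b, w b * ρ α b) :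
    F αp ≤ F α0 := by
  have hL : 0 ≤ Real.log (1 + ε⁻¹) :=
    Real.log_nonneg (le_add_of_nonneg_right (inv_nonneg.mpr hε.le))
  rw [hF, hF]
  refine sum_le_sum_of_le_add_mul_sub univ (w := w) (x := ρ α0) (y := ρ αp)
    (fun b _ => ?_) (hmin α0 π0 h0.1 h0.2)
  rw [hw b]
  exact surrogate_le_add_weight_mul_sub (by linarith [ρ_nonneg h0.1 b])
    (by linarith [ρ_nonneg hp.1 b]) (hP b).le (hq b).1.le hL

/-- One step of the reweighted ℓ1 (convex–concave) procedure does not increase the smooth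
surrogate objective `F`. -/
theorem stmt_10 {K B I : Type*} [Fintype K] [Fintype B] [Fintype I]
    [Nonempty K] [Nonempty B] [Nonempty I]
    (ε : ℝ) (hε : 0 < ε)
    (P q : B → ℝ) (hP : ∀ b, 0 < P b) (hq : ∀ b, 0 < q b ∧ q b ≤ 1)
    (r : K → B → I → ℝ) (hr : ∀ k b i, 0 ≤ r k b i) (d : K → ℝ)
    (F : (K → B → I → ℝ) → ℝ)
    (hF : ∀ α, F α = ∑ b, P b * ((1 - q b) * ρ α b
        + q b * Real.log (ε + ρ α b) / Real.log (1 + ε⁻¹)))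
    (α0 : K → B → I → ℝ) (π0 : I → ℝ)
    (h0 : memX α0 π0 ∧ ∀ k, d k ≤ ∑ i, ∑ b, α0 k b i * r k b i)
    (w : B → ℝ)
    (hw : ∀ b, w b = (1 - q b) * P b
        + q b * P b / (Real.log (1 + ε⁻¹) * (ε + ρ α0 b)))
    (αp : K → B → I → ℝ) (πp : I → ℝ)
    (hp : memX αp πp ∧ ∀ k, d k ≤ ∑ i, ∑ b, αp k b i * r k b i)
    (hmin : ∀ α π, memX α π → (∀ k, d k ≤ ∑ i, ∑ b, α k b i * r k b i) →
      ∑ b, w b * ρ αp b ≤ ∑ b, w b * ρ α b) :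
    F αp ≤ F α0 :=
  stmt_10_general ε hε P q hP hq r d F hF α0 π0 h0 w hw αp πp hp hmin
end

section
/- Consider the reformulated energy-saving problem: minimize ∑_{b ∈ B} P_b [(1 − q_b) ρ'_b + q_b · 𝟙(ρ'_b ≠ 0)] over θ : K × B × I → ℝ and π : I → ℝ with θ_{kbi} ≥ 0, ∑_{k ∈ K} θ_{kbi} ≤ 1 for all b, i, π_i ≥ 0, ∑_{i ∈ I} π_i = 1, and ∑_{i ∈ I} π_i ∑_{b ∈ B} θ_{kbi} r_{kbi} ≥ d_k for all k ∈ K, where ρ'_b = ∑_{i ∈ I} π_i ∑_{k ∈ K} θ_{kbi}. Assume r_{kbi} ≥ 0 and d_k ≥ 0 for all k, b, i. If this problem admits an optimal solution, then it admits an optimal solution at which every rate constraint is tight, i.e. ∑_{i ∈ I} π_i ∑_{b ∈ B} θ_{kbi} r_{kbi} = d_k for all k ∈ K. -/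
/-!
Take an optimal `(θ, π)` and let `S k ≥ d k` be the rate it delivers to test point `k`.
Replacing `θ k b i` by `c k * θ k b i` with `c k = d k / S k ∈ [0, 1]` keeps feasibility and
makes every rate constraint tight, while it can only decrease each usage `ρ'_b`. The power of a
base station is nondecreasing in its usage on `[0, ∞)`, so the objective does not increase and
the rescaled solution is still optimal.
-/

open Finset

section Reformulated

variable {K B I : Type*} [Fintype K] [Fintype B] [Fintype I]

/-- Usage of base station `b` in the reformulated energy-saving problem. -/
def ρ' (θ : K → B → I → ℝ) (π : I → ℝ) (b : B) : ℝ :=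
  ∑ i, π i * ∑ k, θ k b i

/-- Total network power in the reformulated energy-saving problem. -/
noncomputable def Ptot' (P q : B → ℝ) (θ : K → B → I → ℝ) (π : I → ℝ) : ℝ :=
  ∑ b, P b * ((1 - q b) * ρ' θ π b + q b * (if ρ' θ π b ≠ 0 then (1 : ℝ) else 0))

/-- Feasibility for the reformulated energy-saving problem. -/
def FeasP' (r : K → B → I → ℝ) (d : K → ℝ) (θ : K → B → I → ℝ) (π : I → ℝ) : Prop :=
  (∀ k b i, 0 ≤ θ k b i) ∧ (∀ b i, ∑ k, θ k b i ≤ 1) ∧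
    (∀ i, 0 ≤ π i) ∧ (∑ i, π i = 1) ∧
    (∀ k, d k ≤ ∑ i, π i * ∑ b, θ k b i * r k b i)

end Reformulated

section Scaling

variable {K B I : Type*}

def deliveredRate [Fintype B] [Fintype I] (r θ : K → B → I → ℝ) (π : I → ℝ) (k : K) :
    ℝ :=
  ∑ i, π i * ∑ b, θ k b i * r k b i

def scaleByTestPoint (c : K → ℝ) (θ : K → B → I → ℝ) : K → B → I → ℝ :=
  fun k b i => c k * θ k b i

lemma deliveredRate_scaleByTestPoint [Fintype B] [Fintype I] (r θ : K → B → I → ℝ) (π : I → ℝ)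
    (c : K → ℝ) (k : K) :
    deliveredRate r (scaleByTestPoint c θ) π k = c k * deliveredRate r θ π k := by
  simp only [deliveredRate, scaleByTestPoint, mul_sum, mul_assoc, mul_left_comm (c k)]

lemma ρ'_nonneg [Fintype K] [Fintype I] {θ : K → B → I → ℝ} {π : I → ℝ}
    (hθ : ∀ k b i, 0 ≤ θ k b i) (hπ : ∀ i, 0 ≤ π i) (b : B) : 0 ≤ ρ' θ π b :=
  sum_nonneg fun i _ => mul_nonneg (hπ i) (sum_nonneg fun k _ => hθ k b i)

lemma ρ'_scaleByTestPoint_le [Fintype K] [Fintype I] {θ : K → B → I → ℝ} {π : I → ℝ}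
    {c : K → ℝ} (hθ : ∀ k b i, 0 ≤ θ k b i) (hπ : ∀ i, 0 ≤ π i) (hc : ∀ k, c k ≤ 1) (b : B) :
    ρ' (scaleByTestPoint c θ) π b ≤ ρ' θ π b :=
  sum_le_sum fun i _ => mul_le_mul_of_nonneg_left
    (sum_le_sum fun k _ => mul_le_of_le_one_left (hθ k b i) (hc k)) (hπ i)

lemma FeasP'.scaleByTestPoint [Fintype K] [Fintype B] [Fintype I] {r θ : K → B → I → ℝ}
    {d : K → ℝ} {π : I → ℝ} {c : K → ℝ} (h : FeasP' r d θ π) (hc0 : ∀ k, 0 ≤ c k)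
    (hc1 : ∀ k, c k ≤ 1)     (hrate : ∀ k, d k ≤ c k * deliveredRate r θ π k) :
    FeasP' r d (scaleByTestPoint c θ) π := by
  obtain ⟨hθ0, hθ1, hπ0, hπ1, -⟩ := h
  refine ⟨fun k b i => mul_nonneg (hc0 k) (hθ0 k b i), fun b i => ?_, hπ0, hπ1, fun k => ?_⟩
  · calc ∑ k, c k * θ k b i ≤ ∑ k, θ k b i :=
          sum_le_sum fun k _ => mul_le_of_le_one_left (hθ0 k b i) (hc1 k)
      _ ≤ 1 := hθ1 b i
  · exact (hrate k).trans_eq (deliveredRate_scaleByTestPoint r θ π c k).symm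

lemma power_term_le_of_le {q x y : ℝ} (hq0 : 0 ≤ q) (hq1 : q ≤ 1) (hx : 0 ≤ x) (hxy : x ≤ y) :
    (1 - q) * x + q * (if x ≠ 0 then (1 : ℝ) else 0) ≤
      (1 - q) * y + q * (if y ≠ 0 then (1 : ℝ) else 0) := by
  have hind : (if x ≠ 0 then (1 : ℝ) else 0) ≤ if y ≠ 0 then 1 else 0 := by
    split_ifs with hx0 hy0
    · exact le_rfl
    · exact absurd (le_antisymm (not_not.mp hy0 ▸ hxy) hx) hx0
    · exact zero_le_one
    · exact le_rfl
  gcongr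

lemma Ptot'_mono [Fintype K] [Fintype B] [Fintype I] {P q : B → ℝ} (hP : ∀ b, 0 ≤ P b)
    (hq : ∀ b, 0 ≤ q b ∧ q b ≤ 1)
    {θ₁ θ₂ : K → B → I → ℝ} {π₁ π₂ : I → ℝ} (h0 : ∀ b, 0 ≤ ρ' θ₁ π₁ b)
    (hle : ∀ b, ρ' θ₁ π₁ b ≤ ρ' θ₂ π₂ b) :
    Ptot' P q θ₁ π₁ ≤ Ptot' P q θ₂ π₂ :=
  sum_le_sum fun b _ => mul_le_mul_of_nonneg_left
    (power_term_le_of_le (hq b).1 (hq b).2 (h0 b) (hle b)) (hP b)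

end Scaling

theorem stmt_15_general {K B I : Type*} [Fintype K] [Fintype B] [Fintype I]
    (P q : B → ℝ) (hP : ∀ b, 0 < P b) (hq : ∀ b, 0 < q b ∧ q b ≤ 1)
    (r : K → B → I → ℝ)
    (d : K → ℝ) (hd : ∀ k, 0 ≤ d k)
    (hopt : ∃ θ π, FeasP' r d θ π ∧
      ∀ θ' π', FeasP' r d θ' π' → Ptot' P q θ π ≤ Ptot' P q θ' π') :
    ∃ θ π, FeasP' r d θ π ∧
      (∀ θ' π', FeasP' r d θ' π' → Ptot' P q θ π ≤ Ptot' P q θ' π') ∧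
      (∀ k, ∑ i, π i * ∑ b, θ k b i * r k b i = d k) := by
  obtain ⟨θ, π, hfeas, hmin⟩ := hopt
  obtain ⟨hθ, -, hπ, -, hdS⟩ := id hfeas
  set S := deliveredRate r θ π
  -- when `S k = 0` we also have `d k = 0`, so the junk value `d k / 0 = 0` is harmless
  set c : K → ℝ := fun k => d k / S k
  have htight : ∀ k, c k * S k = d k := fun k =>
    div_mul_cancel_of_imp fun h => le_antisymm (h ▸ hdS k) (hd k)
  have hc0 : ∀ k, 0 ≤ c k := fun k => div_nonneg (hd k) ((hd k).trans (hdS k))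
  have hc1 : ∀ k, c k ≤ 1 := fun k => div_le_one_of_le₀ (hdS k) ((hd k).trans (hdS k))
  have hcθ : ∀ k b i, 0 ≤ scaleByTestPoint c θ k b i := fun k b i =>
    mul_nonneg (hc0 k) (hθ k b i)
  have hPtot : Ptot' P q (scaleByTestPoint c θ) π ≤ Ptot' P q θ π :=
    Ptot'_mono (fun b => (hP b).le) (fun b => ⟨(hq b).1.le, (hq b).2⟩) (ρ'_nonneg hcθ hπ)
      (ρ'_scaleByTestPoint_le hθ hπ hc1)
  refine ⟨scaleByTestPoint c θ, π, hfeas.scaleByTestPoint hc0 hc1 fun k => (htight k).ge,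
    fun θ' π' h => hPtot.trans (hmin θ' π' h), fun k => ?_⟩
  exact (deliveredRate_scaleByTestPoint r θ π c k).trans (htight k)

/-- If the reformulated energy-saving problem admits an optimal solution, then it admits an
optimal solution at which every rate constraint is tight. -/
theorem stmt_15 {K B I : Type*} [Fintype K] [Fintype B] [Fintype I]
    [Nonempty K] [Nonempty B] [Nonempty I]
    (P q : B → ℝ) (hP : ∀ b, 0 < P b) (hq : ∀ b, 0 < q b ∧ q b ≤ 1)
    (r : K → B → I → ℝ) (hr : ∀ k b i, 0 ≤ r k b i)
    (d : K → ℝ) (hd : ∀ k, 0 ≤ d k)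
    (hopt : ∃ θ π, FeasP' r d θ π ∧
      ∀ θ' π', FeasP' r d θ' π' → Ptot' P q θ π ≤ Ptot' P q θ' π') :
    ∃ θ π, FeasP' r d θ π ∧
      (∀ θ' π', FeasP' r d θ' π' → Ptot' P q θ π ≤ Ptot' P q θ' π') ∧
      (∀ k, ∑ i, π i * ∑ b, θ k b i * r k b i = d k) :=
  stmt_15_general P q hP hq r d hd hopt
end
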